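/- arXiv:1811.02253 — 2 statements merged into one kernel-verified Lean document; each statement's English description precedes it below -/
import Mathlib

section
/- Consider on ℝ³ the group operation (x,y,θ) ∗ (x',y',θ') = (x + x'·cos θ − y'·sin θ, y + x'·sin θ + y'·cos θ, θ + θ'). For every p ∈ ℝ³, the left translation q ↦ p ∗ q is an isometry of ℝ³ with the Euclidean distance; that is, the Euclidean distance on ℝ³ is left-invariant with respect to ∗. Consequently, ℝ³ (with Euclidean distance) and the universal cover of the Euclidean motion group SE(2) may be made isometric. -/
open Real

/-- The group operation of the universal cover of `SE(2)`, modeled on `ℝ³`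
(here with the Euclidean distance):
`(x,y,θ) ∗ (x',y',θ') = (x + x' cos θ − y' sin θ, y + x' sin θ + y' cos θ, θ + θ')`. -/
noncomputable def se2tMul (p q : EuclideanSpace ℝ (Fin 3)) : EuclideanSpace ℝ (Fin 3) :=
  WithLp.toLp 2 ![p 0 + q 0 * Real.cos (p 2) - q 1 * Real.sin (p 2),
    p 1 + q 0 * Real.sin (p 2) + q 1 * Real.cos (p 2),
    p 2 + q 2]

/-! Left translation by `p` is a rotation by the angle `p 2` in the first two coordinates
followed by a translation, and rotations preserve `u ^ 2 + v ^ 2`. -/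

theorem rotate_sq_add_sq (θ u v : ℝ) :
    (u * cos θ - v * sin θ) ^ 2 + (u * sin θ + v * cos θ) ^ 2 = u ^ 2 + v ^ 2 := by
  linear_combination (u ^ 2 + v ^ 2) * sin_sq_add_cos_sq θ

theorem dist_se2tMul_left (p a b : EuclideanSpace ℝ (Fin 3)) :
    dist (se2tMul p a) (se2tMul p b) = dist a b := by
  simp only [EuclideanSpace.dist_eq, Fin.sum_univ_three, Real.dist_eq, sq_abs, se2tMul,
    Matrix.cons_val_zero, Matrix.cons_val_one, Matrix.cons_val_two, Matrix.head_cons,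
    Matrix.tail_cons]
  congr 1
  linear_combination rotate_sq_add_sq (p 2) (a 0 - b 0) (a 1 - b 1)

/-- The Euclidean distance on `ℝ³` is left-invariant for the group
operation `∗` of the universal cover of `SE(2)`: every left translation `q ↦ p ∗ q`
is an isometry of Euclidean `ℝ³`. Consequently `ℝ³` and the universal cover of `SE(2)`
may be made isometric. -/
theorem se2tilde_leftInvariant_euclidean (p : EuclideanSpace ℝ (Fin 3)) :
    Isometry (fun q : EuclideanSpace ℝ (Fin 3) => se2tMul p q) :=
  Isometry.of_dist_eq (dist_se2tMul_left p)
end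

section
/- Consider on ℝ³ the group operation (x,y,θ) ∗ (x',y',θ') = (x + x'·cos θ − y'·sin θ, y + x'·sin θ + y'·cos θ, θ + θ'). A subgroup N of this group is discrete (in the subspace topology of ℝ³) and normal if and only if there exists k ∈ ℕ (k ≥ 0, with k = 0 giving the trivial subgroup) such that N = N_k := {(0,0,2πkm) : m ∈ ℤ}. -/
open Real

/-- The universal cover of `SE(2)`, modeled as `ℝ³` with the group operation
`(x,y,θ) ∗ (x',y',θ') = (x + x' cos θ − y' sin θ, y + x' sin θ + y' cos θ, θ + θ')`. -/
def SE2Cover : Type := ℝ × ℝ × ℝ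

namespace SE2Cover

/-- The group operation of the universal cover of `SE(2)`. -/
noncomputable def mul' (p q : SE2Cover) : SE2Cover :=
  (p.1 + q.1 * Real.cos p.2.2 - q.2.1 * Real.sin p.2.2,
   p.2.1 + q.1 * Real.sin p.2.2 + q.2.1 * Real.cos p.2.2,
   p.2.2 + q.2.2)

noncomputable instance : Group SE2Cover where
  mul := mul'
  one := ((0 : ℝ), (0 : ℝ), (0 : ℝ))
  inv p := (-(p.1 * Real.cos p.2.2 + p.2.1 * Real.sin p.2.2),
            p.1 * Real.sin p.2.2 - p.2.1 * Real.cos p.2.2,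
            -p.2.2)
  mul_assoc a b c := by
    show mul' (mul' a b) c = mul' a (mul' b c)
    obtain ⟨a1, a2, a3⟩ := a
    obtain ⟨b1, b2, b3⟩ := b
    obtain ⟨c1, c2, c3⟩ := c
    simp only [mul', Real.cos_add, Real.sin_add]
    exact Prod.ext (by ring) (Prod.ext (by ring) (by ring))
  one_mul a := by
    show mul' ((0 : ℝ), (0 : ℝ), (0 : ℝ)) a = a
    obtain ⟨a1, a2, a3⟩ := a
    simp only [mul', Real.cos_zero, Real.sin_zero]
    exact Prod.ext (by ring) (Prod.ext (by ring) (by ring))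
  mul_one a := by
    show mul' a ((0 : ℝ), (0 : ℝ), (0 : ℝ)) = a
    obtain ⟨a1, a2, a3⟩ := a
    simp only [mul']
    exact Prod.ext (by ring) (Prod.ext (by ring) (by ring))
  inv_mul_cancel a := by
    show mul' _ a = ((0 : ℝ), (0 : ℝ), (0 : ℝ))
    obtain ⟨a1, a2, a3⟩ := a
    simp only [mul', Real.cos_neg, Real.sin_neg]
    exact Prod.ext (by ring) (Prod.ext (by ring) (by ring))

noncomputable instance : TopologicalSpace SE2Cover :=
  inferInstanceAs (TopologicalSpace (ℝ × ℝ × ℝ))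

end SE2Cover

/-! A discrete normal subgroup of a connected topological group is central: the conjugacy class
of each of its elements is a connected subset of a discrete space. The centre of the universal
cover of `SE(2)` is the infinite cyclic group generated by the full turn `(0, 0, 2π)`, whose
subgroups are exactly the `N_k`. Conversely each `N_k` is central, hence normal, and discrete since
the turns `(0, 0, θ)` embed `ℝ` into the group. -/

open Subgroup

theorem Subgroup.normal_of_le_center {G : Type*} [Group G] {N : Subgroup G}
    (h : N ≤ center G) : N.Normal where
  conj_mem n hn g := by rw [mem_center_iff.1 (h hn) g, mul_inv_cancel_right]; exact hn

theorem Subgroup.Normal.le_center_of_discreteTopology {G : Type*} [Group G] [TopologicalSpace G]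
    [IsTopologicalGroup G] [ConnectedSpace G] {N : Subgroup G} [DiscreteTopology N]
    (hN : N.Normal) : N ≤ center G := by
  intro p hp
  let conj : G → N := fun g => ⟨g * p * g⁻¹, hN.conj_mem p hp g⟩
  have hconj : Continuous conj := by fun_prop
  refine mem_center_iff.2 fun g => ?_
  have h : conj g = conj 1 := PreconnectedSpace.constant inferInstance hconj
  simpa [conj, mul_inv_eq_iff_eq_mul] using congrArg Subtype.val h

theorem Subgroup.exists_eq_zpowers_pow_of_le_zpowers {G : Type*} [Group G] {g : G}
    {H : Subgroup G} (h : H ≤ zpowers g) : ∃ k : ℕ, H = zpowers (g ^ k) := by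
  let A : AddSubgroup ℤ := (H.comap (zpowersHom G g)).toAddSubgroup
  obtain ⟨a, ha⟩ := Int.subgroup_cyclic A
  rw [← AddSubgroup.zmultiples_eq_closure, ← Int.zmultiples_natAbs] at ha
  have hA (m : ℤ) : g ^ m ∈ H ↔ (a.natAbs : ℤ) ∣ m := by
    rw [← Int.mem_zmultiples_iff, ← ha]; rfl
  refine ⟨a.natAbs, le_antisymm (fun x hx => ?_) (zpowers_le.2 ?_)⟩
  · obtain ⟨m, rfl⟩ := mem_zpowers_iff.1 (h hx)
    obtain ⟨c, rfl⟩ := (hA m).1 hx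
    exact ⟨c, by rw [zpow_mul, zpow_natCast]⟩
  · simpa only [zpow_natCast] using (hA a.natAbs).2 dvd_rfl

namespace SE2Cover

def mk (x y θ : ℝ) : SE2Cover := (x, y, θ)

lemma mk_mul (x y θ x' y' θ' : ℝ) : mk x y θ * mk x' y' θ' =
    mk (x + x' * cos θ - y' * sin θ) (y + x' * sin θ + y' * cos θ) (θ + θ') := rfl

lemma mk_eq_mk {x y θ x' y' θ' : ℝ} : mk x y θ = mk x' y' θ' ↔ x = x' ∧ y = y' ∧ θ = θ' := by
  show ((x, y, θ) : ℝ × ℝ × ℝ) = (x', y', θ') ↔ _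
  simp only [Prod.mk.injEq]

lemma exists_eq_mk (p : SE2Cover) : ∃ x y θ, p = mk x y θ := ⟨p.1, p.2.1, p.2.2, rfl⟩

instance : ConnectedSpace SE2Cover := inferInstanceAs (ConnectedSpace (ℝ × ℝ × ℝ))

instance : IsTopologicalGroup SE2Cover where
  continuous_mul := by
    show Continuous fun pq : (ℝ × ℝ × ℝ) × (ℝ × ℝ × ℝ) => mul' pq.1 pq.2
    unfold mul'
    fun_prop
  continuous_inv := by
    show Continuous fun p : ℝ × ℝ × ℝ => ((-(p.1 * cos p.2.2 + p.2.1 * sin p.2.2),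
      p.1 * sin p.2.2 - p.2.1 * cos p.2.2, -p.2.2) : ℝ × ℝ × ℝ)
    fun_prop

noncomputable def rotation : AddChar ℝ SE2Cover where
  toFun := mk 0 0
  map_zero_eq_one' := rfl
  map_add_eq_mul' a b := by simp [mk_mul]

lemma rotation_apply (θ : ℝ) : rotation θ = mk 0 0 θ := rfl

lemma rotation_mul_natCast (a : ℝ) (k : ℕ) : rotation (a * k) = rotation a ^ k := by
  rw [mul_comm, ← nsmul_eq_mul, AddChar.map_nsmul_eq_pow]

lemma isInducing_rotation : Topology.IsInducing (rotation : ℝ → SE2Cover) :=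
  Topology.isInducing_const_prod.2 (Topology.isInducing_const_prod.2 .id)

lemma coe_zpowers_rotation (a : ℝ) :
    (zpowers (rotation a) : Set SE2Cover) = rotation '' AddSubgroup.zmultiples a := by
  ext p
  simp [mem_zpowers_iff, AddSubgroup.mem_zmultiples_iff, ← AddChar.map_zsmul_eq_zpow]

instance (a : ℝ) : DiscreteTopology (zpowers (rotation a)) := by
  rw [← SetLike.isDiscrete_iff_discreteTopology, coe_zpowers_rotation]
  exact (SetLike.isDiscrete_iff_discreteTopology.2 inferInstance).image isInducing_rotation

lemma coe_zpowers_rotation_eq_setOf (a : ℝ) :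
    (zpowers (rotation a) : Set SE2Cover) = {p | ∃ m : ℤ, p = ((0 : ℝ), (0 : ℝ), a * m)} := by
  ext p
  rw [coe_zpowers_rotation]
  simp only [Set.mem_image, SetLike.mem_coe, AddSubgroup.mem_zmultiples_iff, exists_exists_eq_and, zsmul_eq_mul, rotation_apply]
  refine exists_congr fun m => ?_
  rw [eq_comm, mul_comm]
  rfl

/-- Commuting with a translation forces the rotation angle into `2πℤ`, and commuting with the
half turn `rotation π` then kills the translation part. -/
theorem center_eq_zpowers : center SE2Cover = zpowers (rotation (2 * π)) := by
  ext p
  obtain ⟨x, y, θ, rfl⟩ := exists_eq_mk p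
  rw [Subgroup.mem_center_iff, mem_zpowers_iff]
  simp only [← AddChar.map_zsmul_eq_zpow]
  simp only [rotation_apply, zsmul_eq_mul]
  constructor
  · intro h
    have htrans := h (mk 1 0 0)
    have hhalf := h (rotation π)
    simp only [mk_mul, rotation_apply, mk_eq_mk, cos_pi, sin_pi, cos_zero, sin_zero] at htrans hhalf
    obtain ⟨n, hn⟩ := (cos_eq_one_iff θ).1 (by linarith [htrans.1])
    exact ⟨n, mk_eq_mk.2 ⟨by linarith [hhalf.1], by linarith [hhalf.2.1], hn⟩⟩
  · rintro ⟨m, hm⟩ g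
    obtain ⟨a, b, φ, rfl⟩ := exists_eq_mk g
    rw [← hm, mk_mul, mk_mul, cos_int_mul_two_pi, sin_periodic.int_mul_eq, sin_zero, mk_eq_mk]
    exact ⟨by ring, by ring, by ring⟩

end SE2Cover

/-- A subgroup `N` of the universal cover of `SE(2)` is discrete
(in the subspace topology of `ℝ³`) and normal if and only if
`N = N_k = {(0,0,2πkm) : m ∈ ℤ}` for some `k ∈ ℕ` (`k = 0` giving the trivial
subgroup). -/
theorem discrete_normal_subgroups_of_se2tilde (N : Subgroup SE2Cover) :
    (DiscreteTopology N ∧ N.Normal) ↔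
      ∃ k : ℕ, (N : Set SE2Cover) =
        {p : SE2Cover | ∃ m : ℤ, p = ((0 : ℝ), (0 : ℝ), 2 * π * k * m)} := by
  have hNk (k : ℕ) : N = zpowers (SE2Cover.rotation (2 * π * k)) ↔ (N : Set SE2Cover) =
      {p : SE2Cover | ∃ m : ℤ, p = ((0 : ℝ), (0 : ℝ), 2 * π * k * m)} := by
    rw [← SetLike.coe_set_eq, SE2Cover.coe_zpowers_rotation_eq_setOf]
    exact Iff.rfl
  simp only [← hNk]
  constructor
  · rintro ⟨_, hN⟩
    have hle : N ≤ zpowers (SE2Cover.rotation (2 * π)) :=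
      SE2Cover.center_eq_zpowers ▸ hN.le_center_of_discreteTopology
    simpa only [SE2Cover.rotation_mul_natCast] using exists_eq_zpowers_pow_of_le_zpowers hle
  · rintro ⟨k, rfl⟩
    refine ⟨inferInstance, normal_of_le_center (zpowers_le.2 ?_)⟩
    rw [SE2Cover.center_eq_zpowers, SE2Cover.rotation_mul_natCast]
    exact pow_mem (mem_zpowers _) k
end
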